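/- Let b, g, H, c be positive real numbers such that b/(H c²) > 1/3 and g H/c² > 1. Then for every real number ξ ≠ 0 one has b ξ² + g − c² ξ/tanh(H ξ) > 0. -/

import Mathlib

/-!
Since `x / tanh x < 1 + x² / 3` for `x ≠ 0`, the term `c² ξ / tanh (H ξ)` is strictly smaller than
`c² / H + (H c² / 3) ξ²`, and the two hypotheses say exactly that `c² / H < g` and `H c² / 3 < b`.
The inequality for `x / tanh x` reduces, after clearing `sinh x > 0`, to
`x cosh x < (1 + x² / 3) sinh x`; the derivative of the difference is `x / 3 · (x cosh x - sinh x)`,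
whose positivity is in turn the inequality `sinh x < x cosh x`, again proved by differentiating.
-/

open Real Set

lemma pos_of_map_zero_of_hasDerivAt_pos {f f' : ℝ → ℝ} (hf : ∀ x, HasDerivAt f (f' x) x)
    (hf₀ : f 0 = 0) (hf' : ∀ x, 0 < x → 0 < f' x) {x : ℝ} (hx : 0 < x) : 0 < f x := by
  have hmono : StrictMonoOn f (Ici 0) := by
    refine strictMonoOn_of_hasDerivWithinAt_pos (convex_Ici 0)
      (fun y _ ↦ (hf y).continuousAt.continuousWithinAt) (fun y _ ↦ (hf y).hasDerivWithinAt) ?_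
    rw [interior_Ici]
    exact hf'
  simpa [hf₀] using hmono self_mem_Ici hx.le hx

namespace Real

lemma sinh_lt_mul_cosh {x : ℝ} (hx : 0 < x) : sinh x < x * cosh x := by
  have hderiv : ∀ y, HasDerivAt (fun t ↦ t * cosh t - sinh t) (y * sinh y) y := fun y ↦ by
    refine (((hasDerivAt_id y).mul (hasDerivAt_cosh y)).sub (hasDerivAt_sinh y)).congr_deriv ?_
    simp only [id_eq]
    ring
  have := pos_of_map_zero_of_hasDerivAt_pos hderiv (by simp)
    (fun y hy ↦ mul_pos hy (sinh_pos_iff.mpr hy)) hx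
  linarith

lemma mul_cosh_lt {x : ℝ} (hx : 0 < x) : x * cosh x < (1 + x ^ 2 / 3) * sinh x := by
  have hderiv : ∀ y, HasDerivAt (fun t ↦ (1 + t ^ 2 / 3) * sinh t - t * cosh t)
      (y / 3 * (y * cosh y - sinh y)) y := fun y ↦ by
    refine (((((hasDerivAt_pow 2 y).div_const 3).const_add 1).mul (hasDerivAt_sinh y)).sub
      ((hasDerivAt_id y).mul (hasDerivAt_cosh y))).congr_deriv ?_
    simp only [id_eq]
    ring
  have := pos_of_map_zero_of_hasDerivAt_pos hderiv (by simp)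
    (fun y hy ↦ mul_pos (by positivity) (sub_pos.mpr (sinh_lt_mul_cosh hy))) hx
  linarith

lemma div_tanh_lt {x : ℝ} (hx : x ≠ 0) : x / tanh x < 1 + x ^ 2 / 3 := by
  have of_pos : ∀ y : ℝ, 0 < y → y / tanh y < 1 + y ^ 2 / 3 := fun y hy ↦ by
    rw [tanh_eq_sinh_div_cosh, div_div_eq_mul_div, div_lt_iff₀ (sinh_pos_iff.mpr hy)]
    exact mul_cosh_lt hy
  rcases hx.lt_or_gt with hneg | hxpos
  · simpa [tanh_neg, neg_div_neg_eq] using of_pos (-x) (neg_pos.mpr hneg)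
  · exact of_pos x hxpos

end Real

theorem water_waves_symbol_pos_general
    (b g H c : ℝ) (hH : 0 < H) (hc : 0 < c)
    (hβ : 1 / 3 < b / (H * c ^ 2)) (hα : 1 < g * H / c ^ 2) :
    ∀ ξ : ℝ, ξ ≠ 0 → 0 < b * ξ ^ 2 + g - c ^ 2 * ξ / Real.tanh (H * ξ) := by
  intro ξ hξ
  have hb : H * c ^ 2 / 3 < b := by
    rwa [lt_div_iff₀ (by positivity), one_div_mul_eq_div] at hβ
  have hg : c ^ 2 / H < g := by
    rwa [one_lt_div (by positivity), ← div_lt_iff₀ hH] at hα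
  have hsymbol : c ^ 2 * ξ / tanh (H * ξ) < g + b * ξ ^ 2 :=
    calc c ^ 2 * ξ / tanh (H * ξ) = c ^ 2 / H * (H * ξ / tanh (H * ξ)) := by
          field_simp
      _ < c ^ 2 / H * (1 + (H * ξ) ^ 2 / 3) := by
          gcongr
          exact div_tanh_lt (mul_ne_zero hH.ne' hξ)
      _ = c ^ 2 / H + H * c ^ 2 / 3 * ξ ^ 2 := by
          field_simp
      _ < g + b * ξ ^ 2 := by
          gcongr
  linarith

/-- Positivity of the symbol `m(ξ) = b ξ² + g − c² ξ / tanh(Hξ)` of the linearized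
gravity–capillary water-waves operator in the strong surface tension regime. -/
theorem water_waves_symbol_pos
    (b g H c : ℝ) (hb : 0 < b) (hg : 0 < g) (hH : 0 < H) (hc : 0 < c)
    (hβ : 1 / 3 < b / (H * c ^ 2)) (hα : 1 < g * H / c ^ 2) :
    ∀ ξ : ℝ, ξ ≠ 0 → 0 < b * ξ ^ 2 + g - c ^ 2 * ξ / Real.tanh (H * ξ) :=
  water_waves_symbol_pos_general b g H c hH hc hβ hα
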